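/- arXiv:2106.02832 — 3 statements merged into one kernel-verified Lean document; each statement's English description precedes it below -/
import Mathlib

section
/- For λ with Im(λ) > 0 and any z in the upper half plane, Im(f_λ^n(z)) > n·Im(λ) + Im(z) for every natural number n ≥ 1; in particular f_λ^n(z) → ∞ as n → ∞. -/
open Complex Filter

/-! Since `Im (tan z) = sinh y cosh y / |cos z|²` with `y = Im z`, the tangent maps the upper
half-plane into itself, so each application of `f_λ` raises the imaginary part by more than
`Im λ`. -/

namespace Complex

theorem cos_ne_zero_of_im_ne_zero {z : ℂ} (hz : z.im ≠ 0) : cos z ≠ 0 := by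
  refine cos_ne_zero_iff.mpr fun k hk => hz ?_
  rw [hk]
  norm_cast

/-- Valid also at the poles, where both `tan z` and the division by `normSq (cos z) = 0` are `0`. -/
theorem tan_im (z : ℂ) :
    (tan z).im = Real.sinh z.im * Real.cosh z.im / normSq (cos z) := by
  have hsin : sin z = (Real.sin z.re * Real.cosh z.im : ℝ) +
      (Real.cos z.re * Real.sinh z.im : ℝ) * I := by
    push_cast; exact sin_eq z
  have hcos : cos z = (Real.cos z.re * Real.cosh z.im : ℝ) +
      (-(Real.sin z.re * Real.sinh z.im) : ℝ) * I := by
    push_cast; rw [cos_eq]; ring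
  rw [tan_eq_sin_div_cos, div_im, ← sub_div, hsin, hcos]
  simp only [add_re, add_im, ofReal_re, ofReal_im, mul_re, mul_im, I_re, I_im]
  congr 1
  linear_combination Real.sinh z.im * Real.cosh z.im * Real.sin_sq_add_cos_sq z.re

theorem tan_im_pos {z : ℂ} (hz : 0 < z.im) : 0 < (tan z).im := by
  have hcos : 0 < normSq (cos z) := normSq_pos.mpr (cos_ne_zero_of_im_ne_zero hz.ne')
  rw [tan_im]
  have := Real.sinh_pos_iff.mpr hz
  positivity

end Complex

theorem lt_im_iterate_succ {f : ℂ → ℂ} {a : ℝ} (ha : 0 ≤ a)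
    (hf : ∀ w : ℂ, 0 < w.im → w.im + a < (f w).im) {z : ℂ} (hz : 0 < z.im) (n : ℕ) :
    (n + 1) * a + z.im < (f^[n + 1] z).im := by
  induction n with
  | zero => simpa [add_comm] using hf z hz
  | succ n ih =>
    have hpos : 0 < (f^[n + 1] z).im := by
      have : 0 ≤ (n + 1 : ℝ) * a := by positivity
      linarith
    rw [Function.iterate_succ_apply']
    push_cast
    linarith [hf _ hpos]

theorem iterate_im_growth (lam z : ℂ) (hlam : 0 < lam.im) (hz : 0 < z.im) :
    (∀ n : ℕ, 1 ≤ n →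
      (n : ℝ) * lam.im + z.im < ((fun w => lam + w + Complex.tan w)^[n] z).im) ∧
    Tendsto (fun n : ℕ => ‖(fun w => lam + w + Complex.tan w)^[n] z‖)
      atTop atTop := by
  set f : ℂ → ℂ := fun w => lam + w + Complex.tan w
  have hstep (w : ℂ) (hw : 0 < w.im) : w.im + lam.im < (f w).im := by
    simp only [f, add_im]
    linarith [tan_im_pos hw]
  have hgrowth (n : ℕ) (hn : 1 ≤ n) : n * lam.im + z.im < (f^[n] z).im := by
    obtain ⟨m, rfl⟩ := Nat.exists_eq_add_of_le' hn
    exact_mod_cast lt_im_iterate_succ hlam.le hstep hz m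
  refine ⟨hgrowth, ?_⟩
  have hlower : Tendsto (fun n : ℕ => n * lam.im + z.im) atTop atTop :=
    tendsto_atTop_add_const_right _ _ (tendsto_natCast_atTop_atTop.atTop_mul_const hlam)
  have him : Tendsto (fun n => (f^[n] z).im) atTop atTop :=
    tendsto_atTop_mono' _ ((eventually_ge_atTop 1).mono fun n hn => (hgrowth n hn).le) hlower
  exact tendsto_atTop_mono (fun n => (le_abs_self _).trans (abs_im_le_norm _)) him
end

section
/- The set of solutions of cos z = i in ℂ is exactly {π/2 + nπ + i·(−1)^{n+1}·arcsinh(1) : n ∈ ℤ}, where arcsinh(1) = log(1 + √2). Equivalently, the critical points of f_λ(z) = λ + z + tan z (solutions of 1 + sec² z = 0, i.e., cos z = ±i) form the set {π/2 + nπ ± i·arcsinh(1) : n ∈ ℤ}. -/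
/-!
Since `sin (z - π/2) = -cos z`, both equations reduce to equations for the sine at `w = z - π/2`:
`cos z = I` becomes `sin w = sin (-a I)` and `cos z = ±I` becomes `sin² w = sin² (a I)`, where
`a = arsinh 1`, so that `sin (a I) = sinh a · I = I`. The solutions of `sin w = sin y` are
`w = nπ + (-1)ⁿ y`, and those of `sin² w = sin² y` (equivalently `cos 2w = cos 2y`) are `w = nπ ± y`.
-/

open Complex
open scoped Real

namespace Complex

theorem sin_eq_sin_iff_exists_zpow {x y : ℂ} :
    sin x = sin y ↔ ∃ n : ℤ, x = n * π + (-1) ^ n * y := by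
  rw [eq_comm, sin_eq_sin_iff]
  constructor
  · rintro ⟨k, h | h⟩
    · exact ⟨2 * k, by rw [(even_two_mul k).neg_one_zpow, h]; push_cast; ring⟩
    · exact ⟨2 * k + 1, by rw [(odd_two_mul_add_one k).neg_one_zpow, h]; push_cast; ring⟩
  · rintro ⟨n, h⟩
    obtain ⟨k, rfl | rfl⟩ := n.even_or_odd'
    · exact ⟨k, Or.inl (by rw [h, (even_two_mul k).neg_one_zpow]; push_cast; ring)⟩
    · exact ⟨k, Or.inr (by rw [h, (odd_two_mul_add_one k).neg_one_zpow]; push_cast; ring)⟩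

theorem sin_sq_eq_sin_sq_iff {x y : ℂ} :
    sin x ^ 2 = sin y ^ 2 ↔ ∃ k : ℤ, x = k * π + y ∨ x = k * π - y := by
  have h_double : sin x ^ 2 = sin y ^ 2 ↔ cos (2 * y) = cos (2 * x) := by
    rw [cos_two_mul_eq_one_sub, cos_two_mul_eq_one_sub, sub_right_inj,
      mul_right_inj' two_ne_zero, eq_comm]
  rw [h_double, cos_eq_cos_iff]
  refine exists_congr fun k => or_congr ?_ ?_ <;>
    exact ⟨fun h => by linear_combination h / 2, fun h => by linear_combination 2 * h⟩

end Complex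

theorem sin_arsinh_one_mul_I : sin ((Real.arsinh 1 : ℝ) * I) = I := by
  rw [sin_mul_I, ← ofReal_sinh, Real.sinh_arsinh, ofReal_one, one_mul]

theorem cos_eq_I_solutions :
    ({z : ℂ | Complex.cos z = Complex.I} =
      {z : ℂ | ∃ n : ℤ, z = Real.pi / 2 + (n : ℂ) * Real.pi +
        ((-1 : ℂ) ^ (n + 1) * (Real.arsinh 1 : ℝ)) * Complex.I}) ∧
    ({z : ℂ | Complex.cos z = Complex.I ∨ Complex.cos z = -Complex.I} =
      {z : ℂ | ∃ n : ℤ, z = Real.pi / 2 + (n : ℂ) * Real.pi +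
          (Real.arsinh 1 : ℝ) * Complex.I ∨
        z = Real.pi / 2 + (n : ℂ) * Real.pi - (Real.arsinh 1 : ℝ) * Complex.I}) := by
  have h_cos (z : ℂ) : cos z = -sin (z - π / 2) := by rw [sin_sub_pi_div_two, neg_neg]
  refine ⟨Set.ext fun z => ?_, Set.ext fun z => ?_⟩
  · have h_sin : cos z = I ↔ sin (z - π / 2) = sin (-((Real.arsinh 1 : ℝ) * I)) := by
      rw [h_cos, sin_neg, sin_arsinh_one_mul_I, neg_eq_iff_eq_neg]
    simp only [Set.mem_ofPred_eq, h_sin, sin_eq_sin_iff_exists_zpow]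
    refine exists_congr fun n => ?_
    rw [zpow_add_one₀ (by norm_num)]
    constructor <;> intro h <;> linear_combination h
  · have h_sin_sq : cos z = I ∨ cos z = -I ↔
        sin (z - π / 2) ^ 2 = sin ((Real.arsinh 1 : ℝ) * I) ^ 2 := by
      rw [← sq_eq_sq_iff_eq_or_eq_neg, h_cos, sin_arsinh_one_mul_I, neg_sq]
    simp only [Set.mem_ofPred_eq, h_sin_sq, sin_sq_eq_sin_sq_iff, sub_eq_iff_eq_add]
    refine exists_congr fun n => or_congr ?_ ?_ <;> constructor <;> intro h <;> linear_combination h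
end

section
/- If m is an integer and x is a real number with |x − (mπ + π/2)| ≤ π/16, then π/2 − 0.6658 − sinh(1.3316)/(cos(2x) + cosh(1.3316)) < −0.6658. -/
/-!
Write `a = 1.3316`. On the interval, `cos 2x ≤ -cos (π/8)`, so the positive denominator
`cos 2x + cosh a` is at most `cosh a - cos (π/8)` and the fraction is at least
`sinh a / (cosh a - cos (π/8))`. This exceeds `π/2` by the numerical bounds
`3.7775 < e^a < 3.83` and `cos (π/8) > 0.92`.
-/

open Real

theorem cos_two_mul_le_neg_cos_two_mul_of_abs_sub_le {m : ℤ} {x δ : ℝ}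
    (hx : |x - (m * π + π / 2)| ≤ δ) (hδ : δ ≤ π / 2) : cos (2 * x) ≤ -cos (2 * δ) := by
  set u := x - (m * π + π / 2)
  have hcos : cos (2 * x) = -cos (2 * u) := by
    rw [show 2 * x = 2 * u + π + m * (2 * π) by ring, cos_add_int_mul_two_pi, cos_add_pi]
  have h2u : |2 * u| ≤ 2 * δ := by rw [abs_mul, abs_two]; linarith
  have := cos_le_cos_of_nonneg_of_le_pi (abs_nonneg _) (by linarith) h2u
  rw [cos_abs] at this
  linarith

theorem exp_1_3316_gt : (3.7775 : ℝ) < exp 1.3316 := by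
  have h := sum_le_exp_of_nonneg (x := 1.3316) (by norm_num) 6
  norm_num [Finset.sum_range_succ, Nat.factorial] at h
  linarith

theorem exp_1_3316_lt : exp 1.3316 < 3.83 := by
  have h := one_sub_div_pow_le_exp_neg (n := 100) (t := 1.3316) (by norm_num)
  rw [exp_neg, le_inv_comm₀ (by norm_num) (exp_pos _)] at h
  exact h.trans_lt (by norm_num)

theorem cos_pi_div_eight_gt : (0.92 : ℝ) < cos (π / 8) := by
  nlinarith [one_sub_sq_div_two_le_cos (x := π / 8), pi_lt_d2, pi_pos]

/- Cleared of denominators this reads `(π - 2) e^a + (π + 2) e^(-a) < 2π cos (π/8)`, increasing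
in both exponentials, so upper bounds on `e^a` and `e^(-a)` suffice. -/
theorem pi_div_two_mul_cosh_sub_cos_pi_div_eight_lt_sinh :
    π / 2 * (cosh 1.3316 - cos (π / 8)) < sinh 1.3316 := by
  have hexp_neg : exp (-1.3316) < 0.2648 := by
    rw [exp_neg, inv_lt_comm₀ (exp_pos _) (by norm_num)]
    linarith [exp_1_3316_gt]
  rw [cosh_eq, sinh_eq]
  nlinarith [exp_1_3316_lt, cos_pi_div_eight_gt, pi_gt_d6, pi_lt_d6, exp_pos (-1.3316)]

theorem estimate_three (m : ℤ) (x : ℝ)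
    (hx : |x - (m * Real.pi + Real.pi / 2)| ≤ Real.pi / 16) :
    Real.pi / 2 - 0.6658 -
        Real.sinh 1.3316 / (Real.cos (2 * x) + Real.cosh 1.3316) <
      -0.6658 := by
  have hcos : cos (2 * x) ≤ -cos (π / 8) := by
    have := cos_two_mul_le_neg_cos_two_mul_of_abs_sub_le hx (by linarith [pi_pos])
    rwa [show 2 * (π / 16) = π / 8 by ring] at this
  have hcosh : 1 < cosh 1.3316 := one_lt_cosh.2 (by norm_num)
  have hden : 0 < cosh 1.3316 - cos (π / 8) := by linarith [cos_le_one (π / 8)]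
  have hfrac : sinh 1.3316 / (cosh 1.3316 - cos (π / 8)) ≤
      sinh 1.3316 / (cos (2 * x) + cosh 1.3316) :=
    div_le_div_of_nonneg_left (sinh_nonneg_iff.2 (by norm_num))
      (by linarith [neg_one_le_cos (2 * x)]) (by linarith)
  have hpi := (lt_div_iff₀ hden).2 pi_div_two_mul_cosh_sub_cos_pi_div_eight_lt_sinh
  linarith
end
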